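/- arXiv:2103.01808 — 5 statements merged into one kernel-verified Lean document; each statement's English description precedes it below -/
import Mathlib

section
/- Let H be a Hermitian operator and {L_μ} a finite set of operators on a finite-dimensional Hilbert space, defining the Lindblad generator L[ρ] = -i[H,ρ] + Σ_μ (2 L_μ ρ L_μ† - {L_μ† L_μ, ρ}). If A is an operator and ρ_∞ a state with L[ρ_∞] = 0 such that [L_μ, A] ρ_∞ = 0 for all μ and (-i[H,A] - Σ_μ [L_μ†, A] L_μ) ρ_∞ = iλ A ρ_∞ for some real λ, then ρ = A ρ_∞ satisfies L[ρ] = iλ ρ, i.e. ρ is an eigenvector of the Lindbladian with purely imaginary eigenvalue iλ. -/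
open Matrix
open scoped ComplexOrder

noncomputable section

/-- The Lindblad superoperator `L[ρ] = -i[H,ρ] + Σ_μ (2 L_μ ρ L_μ† - L_μ† L_μ ρ - ρ L_μ† L_μ)`. -/
def lind {d ι : Type*} [Fintype d] [DecidableEq d] [Fintype ι]
    (H : Matrix d d ℂ) (L : ι → Matrix d d ℂ) (ρ : Matrix d d ℂ) : Matrix d d ℂ :=
  -Complex.I • (H * ρ - ρ * H) +
    ∑ μ, ((2 : ℂ) • (L μ * ρ * (L μ)ᴴ) - ((L μ)ᴴ * L μ * ρ + ρ * ((L μ)ᴴ * L μ)))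

theorem sufficiency_for_purely_imaginary_eigenvalue
    {d ι : Type*} [Fintype d] [DecidableEq d] [Fintype ι]
    (H : Matrix d d ℂ) (hH : H.IsHermitian) (L : ι → Matrix d d ℂ)
    (A ρinf : Matrix d d ℂ) (hpsd : ρinf.PosSemidef) (htr : ρinf.trace = 1)
    (hstat : lind H L ρinf = 0)
    (hjump : ∀ μ, (L μ * A - A * L μ) * ρinf = 0)
    (lam : ℝ)
    (heig : (-Complex.I • (H * A - A * H) -
        ∑ μ, ((L μ)ᴴ * A - A * (L μ)ᴴ) * L μ) * ρinf
        = (Complex.I * (lam : ℂ)) • (A * ρinf)) :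
    lind H L (A * ρinf) = (Complex.I * (lam : ℂ)) • (A * ρinf) := by
  have hj : ∀ μ, L μ * (A * ρinf) = A * (L μ * ρinf) := by
    intro μ
    have h := hjump μ
    rw [sub_mul, sub_eq_zero] at h
    rw [← mul_assoc, h, mul_assoc]
  have expand : lind H L (A * ρinf) = A * lind H L ρinf +
      (-Complex.I • (H * A - A * H) -
        ∑ μ, ((L μ)ᴴ * A - A * (L μ)ᴴ) * L μ) * ρinf := by
    have per : ∀ μ ∈ (Finset.univ : Finset ι),
        (2 : ℂ) • (L μ * (A * ρinf) * (L μ)ᴴ) -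
          ((L μ)ᴴ * L μ * (A * ρinf) + (A * ρinf) * ((L μ)ᴴ * L μ)) =
        A * ((2 : ℂ) • (L μ * ρinf * (L μ)ᴴ) -
          ((L μ)ᴴ * L μ * ρinf + ρinf * ((L μ)ᴴ * L μ))) -
          ((L μ)ᴴ * A - A * (L μ)ᴴ) * L μ * ρinf := by
      intro μ _
      have h1 : (L μ)ᴴ * L μ * (A * ρinf) = (L μ)ᴴ * (A * (L μ * ρinf)) := by
        rw [mul_assoc, hj μ]
      rw [hj μ, h1]
      simp only [mul_smul_comm, smul_mul_assoc, mul_assoc, mul_add, mul_sub,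
        add_mul, sub_mul]
      abel
    unfold lind
    rw [Finset.sum_congr rfl per]
    rw [Finset.sum_sub_distrib, ← Finset.mul_sum, ← Finset.sum_mul]
    rw [mul_add, sub_mul]
    have hns : -Complex.I • (H * (A * ρinf) - A * ρinf * H) =
        A * (-Complex.I • (H * ρinf - ρinf * H)) +
          (-Complex.I • (H * A - A * H)) * ρinf := by
      simp only [mul_smul_comm, smul_mul_assoc, smul_sub, mul_sub, sub_mul,
        mul_assoc]
      abel
    rw [hns]
    abel
  rw [expand, hstat, mul_zero, zero_add, heig]
end
end

section
/- Let H be Hermitian and A satisfy [H, A] = ω A for real ω, and suppose [L_μ, A] = [L_μ†, A] = 0 for all μ (A is a strong dynamical symmetry). Then for any stationary state ρ_∞ with L[ρ_∞] = 0 and any nonnegative integers n, m, the operator ρ_{nm} = A^n ρ_∞ (A†)^m satisfies L[ρ_{nm}] = -iω(n-m) ρ_{nm}. -/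
open Matrix

noncomputable section

lemma conj_comm_aux {d : Type*} [Fintype d] [DecidableEq d] {X Y : Matrix d d ℂ}
    (h : X * Y = Y * X) : Yᴴ * Xᴴ = Xᴴ * Yᴴ := by
  have := congrArg conjTranspose h
  simpa [conjTranspose_mul] using this

lemma left_swap {d : Type*} [Fintype d] [DecidableEq d]
    {X c : Matrix d d ℂ} (b ρ : Matrix d d ℂ) (h : X * c = c * X) :
    X * (c * ρ * b) = c * (X * ρ) * b := by
  rw [← mul_assoc, ← mul_assoc, h]
  simp only [mul_assoc]

lemma right_swap {d : Type*} [Fintype d] [DecidableEq d]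
    {Y b : Matrix d d ℂ} (c ρ : Matrix d d ℂ) (h : b * Y = Y * b) :
    (c * ρ * b) * Y = c * (ρ * Y) * b := by
  rw [mul_assoc, h, ← mul_assoc, mul_assoc c ρ Y]

/-- If `A` is a strong dynamical symmetry, then `ρ_{nm} = Aⁿ ρ_∞ (A†)ᵐ` is an eigenmode
of the Lindbladian with eigenvalue `-iω(n-m)`. -/
theorem strong_dynamical_symmetry_gives_oscillating_eigenmodes
    {d ι : Type*} [Fintype d] [DecidableEq d] [Fintype ι]
    (H : Matrix d d ℂ) (hH : H.IsHermitian) (L : ι → Matrix d d ℂ)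
    (A : Matrix d d ℂ) (ω : ℝ)
    (hHA : H * A - A * H = (ω : ℂ) • A)
    (hLA : ∀ μ, L μ * A = A * L μ)
    (hLdA : ∀ μ, (L μ)ᴴ * A = A * (L μ)ᴴ)
    (ρinf : Matrix d d ℂ) (hstat : lind H L ρinf = 0)
    (n m : ℕ) :
    lind H L (A ^ n * ρinf * (Aᴴ) ^ m)
      = (-Complex.I * (ω : ℂ) * ((n : ℂ) - (m : ℂ))) • (A ^ n * ρinf * (Aᴴ) ^ m) := by
  -- basic commutation facts
  have hHA' : H * A = A * H + (ω : ℂ) • A := by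
    rw [← hHA]; abel
  have hAdH : Aᴴ * H = H * Aᴴ + (ω : ℂ) • Aᴴ := by
    have := congrArg conjTranspose hHA
    simp only [conjTranspose_sub, conjTranspose_mul, conjTranspose_smul, hH.eq,
      Complex.star_def, Complex.conj_ofReal] at this
    rw [← this]; abel
  -- powers
  have hHpow : ∀ k : ℕ, H * A ^ k = A ^ k * H + ((k : ℂ) * ω) • A ^ k := by
    intro k
    induction k with
    | zero => simp
    | succ j ih =>
      rw [pow_succ, ← mul_assoc, ih, add_mul, smul_mul_assoc, mul_assoc, hHA']
      rw [mul_add, ← mul_assoc, ← pow_succ, mul_smul_comm, ← pow_succ]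
      push_cast
      rw [add_mul, one_mul, add_smul]
      abel
  have hpowH : ∀ k : ℕ, (Aᴴ) ^ k * H = H * (Aᴴ) ^ k + ((k : ℂ) * ω) • (Aᴴ) ^ k := by
    intro k
    induction k with
    | zero => simp
    | succ j ih =>
      rw [pow_succ, mul_assoc, hAdH, mul_add, ← mul_assoc, ih, add_mul, mul_smul_comm,
        ← pow_succ, smul_mul_assoc, ← pow_succ, mul_assoc]
      push_cast
      rw [add_mul, one_mul, add_smul, ← pow_succ]
      abel
  have hAdL : ∀ μ, Aᴴ * L μ = L μ * Aᴴ := fun μ => by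
    simpa using conj_comm_aux (hLdA μ)
  have hAdLd : ∀ μ, Aᴴ * (L μ)ᴴ = (L μ)ᴴ * Aᴴ := fun μ => conj_comm_aux (hLA μ)
  -- commutation with powers
  have hLc : ∀ μ, L μ * A ^ n = A ^ n * L μ := fun μ =>
    (Commute.pow_right (hLA μ) n)
  have hLdc : ∀ μ, (L μ)ᴴ * A ^ n = A ^ n * (L μ)ᴴ := fun μ =>
    (Commute.pow_right (hLdA μ) n)
  have hbL : ∀ μ, (Aᴴ) ^ m * L μ = L μ * (Aᴴ) ^ m := fun μ =>
    (Commute.pow_left (hAdL μ) m)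
  have hbLd : ∀ μ, (Aᴴ) ^ m * (L μ)ᴴ = (L μ)ᴴ * (Aᴴ) ^ m := fun μ =>
    (Commute.pow_left (hAdLd μ) m)
  set C := A ^ n with hC
  set B := (Aᴴ) ^ m with hB
  set ρ := ρinf with hρ
  -- the dissipator part transforms covariantly
  have hLLC : ∀ μ, ((L μ)ᴴ * L μ) * C = C * ((L μ)ᴴ * L μ) := by
    intro μ
    rw [mul_assoc, hLc, ← mul_assoc, hLdc, mul_assoc]
  have hBLL : ∀ μ, B * ((L μ)ᴴ * L μ) = ((L μ)ᴴ * L μ) * B := by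
    intro μ
    rw [← mul_assoc, hbLd, mul_assoc, hbL, ← mul_assoc]
  have hsum :
      (∑ μ, ((2 : ℂ) • (L μ * (C * ρ * B) * (L μ)ᴴ) -
        ((L μ)ᴴ * L μ * (C * ρ * B) + (C * ρ * B) * ((L μ)ᴴ * L μ)))) =
      C * (∑ μ, ((2 : ℂ) • (L μ * ρ * (L μ)ᴴ) -
        ((L μ)ᴴ * L μ * ρ + ρ * ((L μ)ᴴ * L μ)))) * B := by
    rw [Finset.mul_sum, Finset.sum_mul]
    refine Finset.sum_congr rfl fun μ _ => ?_
    rw [left_swap B ρ (hLc μ), right_swap C (L μ * ρ) (hbLd μ),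
      left_swap B ρ (hLLC μ), right_swap C ρ (hBLL μ)]
    simp only [sub_mul, add_mul, smul_mul_assoc, mul_assoc]
    rw [mul_sub, mul_add, mul_smul_comm]
  -- extract the dissipator value from stationarity
  have hS : (∑ μ, ((2 : ℂ) • (L μ * ρ * (L μ)ᴴ) -
      ((L μ)ᴴ * L μ * ρ + ρ * ((L μ)ᴴ * L μ)))) =
      Complex.I • (H * ρ - ρ * H) := by
    have h := eq_neg_of_add_eq_zero_right hstat
    simpa [lind, neg_smul] using h
  -- expand H through the powers
  have e1 : H * (C * ρ * B) = C * (H * ρ) * B + ((n : ℂ) * ω) • (C * ρ * B) := by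
    rw [← mul_assoc, ← mul_assoc, hC, hHpow n, add_mul, add_mul, smul_mul_assoc,
      smul_mul_assoc, mul_assoc (A ^ n) H ρ]
  have e2 : (C * ρ * B) * H = C * (ρ * H) * B + ((m : ℂ) * ω) • (C * ρ * B) := by
    rw [mul_assoc, hB, hpowH m, mul_add, mul_smul_comm, ← mul_assoc, mul_assoc C ρ H]
  show lind H L (C * ρ * B) = _
  rw [lind, hsum, hS, e1, e2]
  simp only [mul_sub, sub_mul, mul_add, add_mul, mul_smul_comm, smul_mul_assoc,
    smul_sub, smul_add, mul_assoc, smul_smul]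
  module
end
end

section
/- Suppose A is unitary, ρ_∞ is Hermitian with L[ρ_∞] = 0, [L_μ, A] ρ_∞ = 0 for all μ, and (-i[H,A] - Σ_μ [L_μ†,A] L_μ) ρ_∞ = iλ A ρ_∞ with λ real. Then: (i) -i ρ_∞ A† [H, A] ρ_∞ = iλ ρ_∞², and (ii) ρ_∞ A† [L_μ†, A] L_μ ρ_∞ = 0 for all μ. -/
open Matrix

noncomputable section

/-- Necessary conditions for a purely imaginary eigenvalue in terms of a unitary `A`
and a stationary state `ρ_∞`. -/
theorem necessary_conditions_purely_imaginary
    {d ι : Type*} [Fintype d] [DecidableEq d] [Fintype ι]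
    (H : Matrix d d ℂ) (hH : H.IsHermitian) (L : ι → Matrix d d ℂ)
    (A ρinf : Matrix d d ℂ)
    (hA : A ∈ Matrix.unitaryGroup d ℂ)
    (hherm : ρinf.IsHermitian)
    (hstat : lind H L ρinf = 0)
    (hjump : ∀ μ, (L μ * A - A * L μ) * ρinf = 0)
    (lam : ℝ)
    (heig : (-Complex.I • (H * A - A * H) -
        ∑ μ, ((L μ)ᴴ * A - A * (L μ)ᴴ) * L μ) * ρinf
        = (Complex.I * (lam : ℂ)) • (A * ρinf)) :
    -Complex.I • (ρinf * Aᴴ * (H * A - A * H) * ρinf)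
        = (Complex.I * (lam : ℂ)) • (ρinf * ρinf) ∧
      ∀ μ, ρinf * Aᴴ * ((L μ)ᴴ * A - A * (L μ)ᴴ) * L μ * ρinf = 0 := by
  have hAA : Aᴴ * A = 1 := by
    simpa [Matrix.star_eq_conjTranspose] using hA.1
  have hAA' : ∀ X : Matrix d d ℂ, Aᴴ * (A * X) = X := by
    intro X
    rw [← mul_assoc, hAA, one_mul]
  have h2 : ∀ μ, ρinf * Aᴴ * (L μ)ᴴ = ρinf * (L μ)ᴴ * Aᴴ := by
    intro μ
    have h1 : ρinf * (Aᴴ * (L μ)ᴴ) - ρinf * ((L μ)ᴴ * Aᴴ) = 0 := by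
      have := congrArg conjTranspose (hjump μ)
      simpa [Matrix.conjTranspose_mul, Matrix.conjTranspose_sub, hherm.eq,
        Matrix.mul_sub] using this
    have := sub_eq_zero.mp h1
    rw [mul_assoc, this, mul_assoc]
  have hmu : ∀ μ, ρinf * Aᴴ * ((L μ)ᴴ * A - A * (L μ)ᴴ) * L μ * ρinf = 0 := by
    intro μ
    calc ρinf * Aᴴ * ((L μ)ᴴ * A - A * (L μ)ᴴ) * L μ * ρinf
        = (ρinf * Aᴴ * (L μ)ᴴ) * A * L μ * ρinf
          - ρinf * (Aᴴ * A) * ((L μ)ᴴ * L μ * ρinf) := by noncomm_ring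
      _ = ρinf * (L μ)ᴴ * (Aᴴ * A) * L μ * ρinf
          - ρinf * (Aᴴ * A) * ((L μ)ᴴ * L μ * ρinf) := by rw [h2 μ]; noncomm_ring
      _ = 0 := by rw [hAA]; noncomm_ring
  refine ⟨?_, hmu⟩
  have hmu'' : ∀ μ, ρinf * (Aᴴ * ((L μ)ᴴ * (A * (L μ * ρinf))))
      = ρinf * ((L μ)ᴴ * (L μ * ρinf)) := by
    intro μ
    calc ρinf * (Aᴴ * ((L μ)ᴴ * (A * (L μ * ρinf))))
        = (ρinf * Aᴴ * (L μ)ᴴ) * (A * (L μ * ρinf)) := by noncomm_ring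
      _ = (ρinf * (L μ)ᴴ * Aᴴ) * (A * (L μ * ρinf)) := by rw [h2 μ]
      _ = ρinf * (L μ)ᴴ * (Aᴴ * (A * (L μ * ρinf))) := by noncomm_ring
      _ = ρinf * ((L μ)ᴴ * (L μ * ρinf)) := by rw [hAA' (L μ * ρinf)]; noncomm_ring
  have h := congrArg (fun X => ρinf * Aᴴ * X) heig
  simp only [Matrix.sub_mul, Matrix.smul_mul, Finset.sum_mul, Matrix.mul_sub,
    Matrix.mul_smul, Matrix.mul_sum, mul_assoc, hAA', hmu'', sub_self,
    Finset.sum_const_zero, sub_zero] at h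
  simpa [Matrix.mul_sub, Matrix.sub_mul, mul_assoc, hAA'] using h
end
end

section
/- For the three-site XXZ Hamiltonian with periodic boundary conditions H = Σ_{j=1}^{3} (σ_j⁺ σ_{j+1}⁻ + σ_j⁻ σ_{j+1}⁺ + Δ σ_j^z σ_{j+1}^z + B σ_j^z) (indices mod 3), the operator A = (|001⟩ - |010⟩)⟨000| satisfies [H, A] = ω A with ω = -1 + 2B - 4Δ, and with ρ_∞ = |000⟩⟨000| one has σ₁⁻ (|001⟩ - |010⟩) = 0, so that with Lindblad operator L = γ σ₁⁻ one has [L, A]ρ_∞ = 0. -/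
open Matrix
open Kronecker

noncomputable section

/-- Index type for three qubits. -/
abbrev QIdx := Fin 2 × Fin 2 × Fin 2

/-- `σ⁺` on one qubit: `σ⁺|0⟩ = |1⟩`. -/
def sp : Matrix (Fin 2) (Fin 2) ℂ := Matrix.of fun a b => if a = 1 ∧ b = 0 then 1 else 0

/-- `σ⁻` on one qubit: `σ⁻|1⟩ = |0⟩`. -/
def sm : Matrix (Fin 2) (Fin 2) ℂ := Matrix.of fun a b => if a = 0 ∧ b = 1 then 1 else 0

/-- `σ^z` on one qubit: `σ^z|1⟩ = |1⟩`, `σ^z|0⟩ = -|0⟩`. -/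
def sz : Matrix (Fin 2) (Fin 2) ℂ :=
  Matrix.of fun a b => if a = b then (if a = 1 then 1 else -1) else 0

/-- Embedding of a single-qubit operator on site 1. -/
def op1 (M : Matrix (Fin 2) (Fin 2) ℂ) : Matrix QIdx QIdx ℂ :=
  M ⊗ₖ (1 : Matrix (Fin 2 × Fin 2) (Fin 2 × Fin 2) ℂ)

/-- Embedding of a single-qubit operator on site 2. -/
def op2 (M : Matrix (Fin 2) (Fin 2) ℂ) : Matrix QIdx QIdx ℂ :=
  (1 : Matrix (Fin 2) (Fin 2) ℂ) ⊗ₖ (M ⊗ₖ (1 : Matrix (Fin 2) (Fin 2) ℂ))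

/-- Embedding of a single-qubit operator on site 3. -/
def op3 (M : Matrix (Fin 2) (Fin 2) ℂ) : Matrix QIdx QIdx ℂ :=
  (1 : Matrix (Fin 2) (Fin 2) ℂ) ⊗ₖ ((1 : Matrix (Fin 2) (Fin 2) ℂ) ⊗ₖ M)

/-- The three-site XXZ Hamiltonian with periodic boundary conditions. -/
def xxzH (Δ B : ℝ) : Matrix QIdx QIdx ℂ :=
  (op1 sp * op2 sm + op1 sm * op2 sp + (Δ : ℂ) • (op1 sz * op2 sz) + (B : ℂ) • op1 sz)
  + (op2 sp * op3 sm + op2 sm * op3 sp + (Δ : ℂ) • (op2 sz * op3 sz) + (B : ℂ) • op2 sz)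
  + (op3 sp * op1 sm + op3 sm * op1 sp + (Δ : ℂ) • (op3 sz * op1 sz) + (B : ℂ) • op3 sz)

/-- Computational basis vector. -/
def e (x : QIdx) : QIdx → ℂ := Pi.single x 1

/-- The lowering operator on site 1. -/
def sigma1Minus : Matrix QIdx QIdx ℂ :=
  Matrix.of fun a b => if a.1 = 0 ∧ b = ((1 : Fin 2), a.2) then 1 else 0

/-- `A = (|001⟩ - |010⟩)⟨000|`. -/
def Aop : Matrix QIdx QIdx ℂ := vecMulVec (e (0,0,1) - e (0,1,0)) (e (0,0,0))

/-- `ρ_∞ = |000⟩⟨000|`. -/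
def rhoInf : Matrix QIdx QIdx ℂ := vecMulVec (e (0,0,0)) (e (0,0,0))

lemma xxzH_kron (Δ B : ℝ) : xxzH Δ B =
    sp ⊗ₖ (sm ⊗ₖ 1) + sm ⊗ₖ (sp ⊗ₖ 1) + (Δ : ℂ) • (sz ⊗ₖ (sz ⊗ₖ 1)) + (B : ℂ) • (sz ⊗ₖ ((1 : Matrix (Fin 2) (Fin 2) ℂ) ⊗ₖ 1))
    + ((1 : Matrix (Fin 2) (Fin 2) ℂ) ⊗ₖ (sp ⊗ₖ sm) + (1 : Matrix (Fin 2) (Fin 2) ℂ) ⊗ₖ (sm ⊗ₖ sp)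
      + (Δ : ℂ) • ((1 : Matrix (Fin 2) (Fin 2) ℂ) ⊗ₖ (sz ⊗ₖ sz)) + (B : ℂ) • ((1 : Matrix (Fin 2) (Fin 2) ℂ) ⊗ₖ (sz ⊗ₖ 1)))
    + (sm ⊗ₖ ((1 : Matrix (Fin 2) (Fin 2) ℂ) ⊗ₖ sp) + sp ⊗ₖ ((1 : Matrix (Fin 2) (Fin 2) ℂ) ⊗ₖ sm)
      + (Δ : ℂ) • (sz ⊗ₖ ((1 : Matrix (Fin 2) (Fin 2) ℂ) ⊗ₖ sz)) + (B : ℂ) • ((1 : Matrix (Fin 2) (Fin 2) ℂ) ⊗ₖ ((1 : Matrix (Fin 2) (Fin 2) ℂ) ⊗ₖ sz))) := by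
  simp only [xxzH, op1, op2, op3, ← Matrix.one_kronecker_one, ← Matrix.mul_kronecker_mul,
    Matrix.one_mul, Matrix.mul_one]

lemma mul_vecMulVec (M : Matrix QIdx QIdx ℂ) (v w : QIdx → ℂ) :
    M * vecMulVec v w = vecMulVec (M.mulVec v) w := by
  ext i j
  simp [Matrix.mul_apply, vecMulVec_apply, Matrix.mulVec, dotProduct, Finset.sum_mul, mul_assoc]

lemma vecMulVec_mul (M : Matrix QIdx QIdx ℂ) (v w : QIdx → ℂ) :
    vecMulVec v w * M = vecMulVec v (M.vecMul w) := by
  ext i j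
  simp [Matrix.mul_apply, vecMulVec_apply, Matrix.vecMul, dotProduct, Finset.mul_sum, mul_assoc]

lemma smul_vecMulVec (c : ℂ) (v w : QIdx → ℂ) :
    vecMulVec (c • v) w = c • vecMulVec v w := by
  ext i j; simp [vecMulVec_apply, mul_assoc]

lemma vecMulVec_smul (c : ℂ) (v w : QIdx → ℂ) :
    vecMulVec v (c • w) = c • vecMulVec v w := by
  ext i j; simp [vecMulVec_apply]; ring

lemma vecMulVec_zero_left (w : QIdx → ℂ) : vecMulVec (0 : QIdx → ℂ) w = 0 := by
  ext i j; simp [vecMulVec_apply]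

set_option maxHeartbeats 2000000 in
lemma hv (Δ B : ℝ) : (xxzH Δ B).mulVec (e (0,0,1) - e (0,1,0))
    = ((-1 - Δ - B : ℝ) : ℂ) • (e (0,0,1) - e (0,1,0)) := by
  rw [xxzH_kron]
  funext ⟨a,b,c⟩
  fin_cases a <;> fin_cases b <;> fin_cases c <;>
    · simp [Matrix.mulVec, dotProduct, Fintype.sum_prod_type, Fin.sum_univ_two,
        sp, sm, sz, e, Matrix.one_apply, Pi.single_apply, Prod.ext_iff]
      try ring

set_option maxHeartbeats 2000000 in
lemma hw (Δ B : ℝ) : (xxzH Δ B).vecMul (e (0,0,0))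
    = ((3 * Δ - 3 * B : ℝ) : ℂ) • e (0,0,0) := by
  rw [xxzH_kron]
  funext ⟨a,b,c⟩
  fin_cases a <;> fin_cases b <;> fin_cases c <;>
    · simp [Matrix.vecMul, dotProduct, Fintype.sum_prod_type, Fin.sum_univ_two,
        sp, sm, sz, e, Matrix.one_apply, Pi.single_apply, Prod.ext_iff]
      try ring

lemma hsm1 : sigma1Minus.mulVec (e (0,0,1) - e (0,1,0)) = 0 := by
  funext ⟨a,b,c⟩
  fin_cases a <;> fin_cases b <;> fin_cases c <;>
    simp [sigma1Minus, e, Matrix.mulVec, dotProduct, Fintype.sum_prod_type,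
      Fin.sum_univ_two, Pi.single_apply, Prod.ext_iff]

lemma hsm0 : sigma1Minus.mulVec (e (0,0,0)) = 0 := by
  funext ⟨a,b,c⟩
  fin_cases a <;> fin_cases b <;> fin_cases c <;>
    simp [sigma1Minus, e, Matrix.mulVec, dotProduct, Fintype.sum_prod_type,
      Fin.sum_univ_two, Pi.single_apply, Prod.ext_iff]

/-- For the three-site XXZ chain, `A = (|001⟩-|010⟩)⟨000|` is a dynamical symmetry with
frequency `ω = -1 + 2B - 4Δ`, its range vector has a node on site 1, and with
`L = γσ₁⁻` one has `[L,A]ρ_∞ = 0`. -/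
theorem xxz_dynamical_symmetry (Δ B γ : ℝ) :
    xxzH Δ B * Aop - Aop * xxzH Δ B = ((-1 + 2 * B - 4 * Δ : ℝ) : ℂ) • Aop ∧
      sigma1Minus.mulVec (e (0,0,1) - e (0,1,0)) = 0 ∧
      ((γ : ℂ) • sigma1Minus * Aop - Aop * ((γ : ℂ) • sigma1Minus)) * rhoInf = 0 := by
  refine ⟨?_, hsm1, ?_⟩
  · rw [Aop, mul_vecMulVec, vecMulVec_mul, hv, hw, smul_vecMulVec, vecMulVec_smul, ← sub_smul]
    congr 1
    push_cast
    ring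
  · have h1 : sigma1Minus * Aop = 0 := by
      rw [Aop, mul_vecMulVec, hsm1, vecMulVec_zero_left]
    have h2 : sigma1Minus * rhoInf = 0 := by
      rw [rhoInf, mul_vecMulVec, hsm0, vecMulVec_zero_left]
    rw [sub_mul, Matrix.smul_mul, h1]
    simp [Matrix.mul_smul, Matrix.smul_mul, Matrix.mul_assoc, h2]
end
end

section
/- Suppose on a finite-dimensional Hilbert space there is an invertible stationary state ρ_∞ (L[ρ_∞]=0, ρ_∞ positive definite) and every operator commuting with H, all L_μ and all L_μ† is a scalar multiple of the identity. Assume further (spectral structure from Theorem 2) that every eigenmode of L with purely imaginary nonzero eigenvalue iω has the form A ρ_∞' with [H,A] = ωA, [L_μ,A] = [L_μ†,A] = 0. Then L has no nonzero purely imaginary eigenvalues: if L[ρ] = iω ρ with ω real and ρ ≠ 0, then ω = 0. -/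
open Matrix
open scoped ComplexOrder

noncomputable section

/-- If there is a full-rank stationary state and the commutant of `{H, L_μ, L_μ†}` is
trivial, then (given the spectral structure of Theorem 2) the Lindbladian has no
nonzero purely imaginary eigenvalues. -/
theorem no_purely_imaginary_eigenvalues_of_trivial_commutant
    {d ι : Type*} [Fintype d] [DecidableEq d] [Nonempty d] [Fintype ι]
    (H : Matrix d d ℂ) (hH : H.IsHermitian) (L : ι → Matrix d d ℂ)
    (ρinf : Matrix d d ℂ) (hpd : ρinf.PosDef) (hstat : lind H L ρinf = 0)
    (hcommutant : ∀ X : Matrix d d ℂ, Commute X H →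
      (∀ μ, Commute X (L μ) ∧ Commute X ((L μ)ᴴ)) → ∃ c : ℂ, X = c • (1 : Matrix d d ℂ))
    (hspectral : ∀ (ρ : Matrix d d ℂ) (ω : ℝ), ρ ≠ 0 → ω ≠ 0 →
      lind H L ρ = (Complex.I * (ω : ℂ)) • ρ →
      ∃ (A ρinf' : Matrix d d ℂ), lind H L ρinf' = 0 ∧ ρ = A * ρinf' ∧
        H * A - A * H = (ω : ℂ) • A ∧
        ∀ μ, Commute (L μ) A ∧ Commute ((L μ)ᴴ) A) :
    ∀ (ρ : Matrix d d ℂ) (ω : ℝ), ρ ≠ 0 →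
      lind H L ρ = (Complex.I * (ω : ℂ)) • ρ → ω = 0 := by
  intro ρ ω hρne hlind
  by_contra hω
  obtain ⟨A, ρinf', h0, hρ, hHA, hL⟩ := hspectral ρ ω hρne hω hlind
  have hA0 : A ≠ 0 := by
    intro h
    apply hρne
    simp [hρ, h]
  -- adjoint commutation relations
  have hHA' : A * H = H * A - (ω : ℂ) • A := by rw [← hHA]; abel
  have hAdjH : H * Aᴴ = Aᴴ * H - (ω : ℂ) • Aᴴ := by
    have := congrArg conjTranspose hHA
    simp only [conjTranspose_sub, conjTranspose_mul, hH.eq, conjTranspose_smul,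
      Complex.star_def, Complex.conj_ofReal] at this
    rw [← this]; abel
  have hAdjL : ∀ μ, Aᴴ * L μ = L μ * Aᴴ := by
    intro μ
    have := congrArg conjTranspose (hL μ).2.eq
    simpa [conjTranspose_mul] using this
  have hAdjLc : ∀ μ, Aᴴ * (L μ)ᴴ = (L μ)ᴴ * Aᴴ := by
    intro μ
    have := congrArg conjTranspose (hL μ).1.eq
    simpa [conjTranspose_mul] using this
  -- X = Aᴴ * A is in the commutant
  have hXH : Commute (Aᴴ * A) H := by
    show Aᴴ * A * H = H * (Aᴴ * A)
    rw [mul_assoc, hHA', ← mul_assoc, hAdjH]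
    simp [mul_sub, sub_mul, mul_smul_comm, smul_mul_assoc, mul_assoc]
  have hXL : ∀ μ, Commute (Aᴴ * A) (L μ) ∧ Commute (Aᴴ * A) ((L μ)ᴴ) := by
    intro μ
    constructor
    · show Aᴴ * A * L μ = L μ * (Aᴴ * A)
      rw [mul_assoc, ← (hL μ).1.eq, ← mul_assoc, hAdjL, mul_assoc]
    · show Aᴴ * A * (L μ)ᴴ = (L μ)ᴴ * (Aᴴ * A)
      rw [mul_assoc, ← (hL μ).2.eq, ← mul_assoc, hAdjLc, mul_assoc]
  obtain ⟨c, hc⟩ := hcommutant (Aᴴ * A) hXH hXL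
  have hc0 : c ≠ 0 := by
    intro h
    apply hA0
    rw [← Matrix.conjTranspose_mul_self_eq_zero (A := A), hc, h, zero_smul]
  -- A has a two-sided inverse B = c⁻¹ • Aᴴ
  set B : Matrix d d ℂ := c⁻¹ • Aᴴ with hB
  have hBA : B * A = 1 := by
    rw [hB, smul_mul_assoc, hc, smul_smul, inv_mul_cancel₀ hc0, one_smul]
  have hAB : A * B = 1 := mul_eq_one_comm.mp hBA
  -- trace argument
  have h1 : Matrix.trace (H * A * B) = Matrix.trace H := by
    rw [mul_assoc, hAB, mul_one]
  have h2 : Matrix.trace (A * H * B) = Matrix.trace H := by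
    rw [Matrix.trace_mul_comm, ← mul_assoc, hBA, one_mul]
  have htr := congrArg (fun M => Matrix.trace (M * B)) hHA
  simp only [sub_mul, smul_mul_assoc, hAB, Matrix.trace_sub, Matrix.trace_smul,
    Matrix.trace_one, h1, h2, sub_self] at htr
  have hcard : (Fintype.card d : ℂ) ≠ 0 := by
    exact_mod_cast Fintype.card_ne_zero
  have hmul : (ω : ℂ) * (Fintype.card d : ℂ) = 0 := by
    simpa [smul_eq_mul] using htr.symm
  rcases mul_eq_zero.mp hmul with h | h
  · exact hω (by exact_mod_cast h)
  · exact absurd h hcard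
end
end
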